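/- arXiv:1605.03453 — 4 statements merged into one kernel-verified Lean document; each statement's English description precedes it below -/
import Mathlib

section
/- Let ψ : ℝⁿ → ℂᴺ be a smooth solution of the Soler equation Dψ = λψ + μ|ψ|²ψ which is also a twistor spinor, i.e. ∂ᵢψ + (1/n)γᵢDψ = 0 for all i = 1, …, n. Then the function |ψ|² is constant on ℝⁿ. -/
open Matrix MeasureTheory

noncomputable section

/-- Partial derivative of `f` in the `i`-th coordinate direction at `x`. -/
def epd {n : ℕ} {E : Type*} [NormedAddCommGroup E] [NormedSpace ℝ E]
    (f : EuclideanSpace ℝ (Fin n) → E) (i : Fin n) (x : EuclideanSpace ℝ (Fin n)) : E :=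
  fderiv ℝ f x (EuclideanSpace.single i 1)

/-- The Euclidean Dirac operator associated to the matrices `γ`. -/
def Dirac {n N : ℕ} (γ : Fin n → Matrix (Fin N) (Fin N) ℂ)
    (ψ : EuclideanSpace ℝ (Fin n) → (Fin N → ℂ)) (x : EuclideanSpace ℝ (Fin n)) :
    Fin N → ℂ :=
  ∑ i, (γ i).mulVec (epd ψ i x)

/-- Real part of the standard Hermitian inner product on `ℂᴺ`. -/
def rinner {N : ℕ} (a b : Fin N → ℂ) : ℝ := (∑ k, star (a k) * b k).re

/-- Squared Hermitian norm on `ℂᴺ`. -/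
def nsq {N : ℕ} (a : Fin N → ℂ) : ℝ := rinner a a

/-- The matrices `γᵢ` are skew-Hermitian and satisfy the Clifford relations
`γᵢγⱼ + γⱼγᵢ = -2 δᵢⱼ Id`. -/
def IsCliffordFamily {n N : ℕ} (γ : Fin n → Matrix (Fin N) (Fin N) ℂ) : Prop :=
  (∀ i, (γ i)ᴴ = -(γ i)) ∧
  (∀ i j, γ i * γ j + γ j * γ i =
    if i = j then -(2 : ℂ) • (1 : Matrix (Fin N) (Fin N) ℂ) else 0)

/-- The Soler equation `Dψ = λψ + μ|ψ|²ψ`. -/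
def IsSolerSolution {n N : ℕ} (γ : Fin n → Matrix (Fin N) (Fin N) ℂ) (lam mu : ℝ)
    (ψ : EuclideanSpace ℝ (Fin n) → (Fin N → ℂ)) : Prop :=
  ∀ x, Dirac γ ψ x = (lam + mu * nsq (ψ x)) • ψ x

/-- A twistor spinor on flat `ℝⁿ`: `∂ᵢψ + (1/n) γᵢ Dψ = 0` for all `i`. -/
def IsTwistorSpinor {n N : ℕ} (γ : Fin n → Matrix (Fin N) (Fin N) ℂ)
    (ψ : EuclideanSpace ℝ (Fin n) → (Fin N → ℂ)) : Prop :=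
  ∀ i x, epd ψ i x + ((1 : ℝ) / n) • (γ i).mulVec (Dirac γ ψ x) = 0

/-! Combining the twistor equation with the Soler equation gives
`∂ᵢψ = -((λ + μ|ψ|²)/n) γᵢψ`, so `∂ᵢ|ψ|² = 2⟨ψ, ∂ᵢψ⟩` is a real multiple of `⟨ψ, γᵢψ⟩`,
which vanishes because `γᵢ` is skew-Hermitian. -/

open scoped InnerProductSpace

lemma rinner_eq_inner {N : ℕ} (a b : Fin N → ℂ) :
    rinner a b = ⟪WithLp.toLp 2 a, WithLp.toLp 2 b⟫_ℝ := by
  simp [rinner, PiLp.inner_apply, Complex.inner, mul_comm]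

lemma nsq_eq_norm_sq {N : ℕ} (a : Fin N → ℂ) : nsq a = ‖WithLp.toLp 2 a‖ ^ 2 := by
  rw [nsq, rinner_eq_inner, real_inner_self_eq_norm_sq]

lemma rinner_smul_right {N : ℕ} (a b : Fin N → ℂ) (c : ℝ) :
    rinner a (c • b) = c * rinner a b := by
  rw [rinner_eq_inner, rinner_eq_inner, WithLp.toLp_smul, real_inner_smul_right]

lemma rinner_mulVec_self_eq_zero {N : ℕ} {A : Matrix (Fin N) (Fin N) ℂ} (hA : Aᴴ = -A)
    (a : Fin N → ℂ) : rinner a (A *ᵥ a) = 0 := by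
  have hconj : star (star a ⬝ᵥ A *ᵥ a) = -(star a ⬝ᵥ A *ᵥ a) := by
    rw [← star_dotProduct, star_mulVec, ← dotProduct_mulVec, hA, neg_mulVec, dotProduct_neg]
  have hre := congrArg Complex.re hconj
  simp only [Complex.star_def, Complex.conj_re, Complex.neg_re] at hre
  simp only [rinner, dotProduct, Pi.star_apply] at hre ⊢
  linarith

section Calculus

variable {N : ℕ} {E : Type*} [NormedAddCommGroup E] [NormedSpace ℝ E]

theorem is_const_of_epd_eq_zero {n : ℕ} {f : EuclideanSpace ℝ (Fin n) → E}
    (hf : Differentiable ℝ f) (h : ∀ i x, epd f i x = 0) (x y : EuclideanSpace ℝ (Fin n)) :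
    f x = f y := by
  refine is_const_of_fderiv_eq_zero hf (fun z => ?_) x y
  refine ContinuousLinearMap.coe_injective <|
    (EuclideanSpace.basisFun (Fin n) ℝ).toBasis.ext fun i => ?_
  simpa [epd] using h i z

theorem HasFDerivAt.nsq {f : E → (Fin N → ℂ)} {f' : E →L[ℝ] (Fin N → ℂ)} {x : E}
    (hf : HasFDerivAt f f' x) :
    HasFDerivAt (fun y => nsq (f y)) (2 • (innerSL ℝ (WithLp.toLp 2 (f x))).comp
      ((PiLp.continuousLinearEquiv 2 ℝ (fun _ : Fin N => ℂ)).symm.toContinuousLinearMap.comp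
        f')) x := by
  simp_rw [nsq_eq_norm_sq]
  exact ((PiLp.continuousLinearEquiv 2 ℝ _).symm.hasFDerivAt.comp x hf).norm_sq

theorem Differentiable.nsq {f : E → (Fin N → ℂ)} (hf : Differentiable ℝ f) :
    Differentiable ℝ (fun y => nsq (f y)) :=
  fun x => (hf x).hasFDerivAt.nsq.differentiableAt

theorem epd_nsq_comp {n : ℕ} {f : EuclideanSpace ℝ (Fin n) → (Fin N → ℂ)}
    {x : EuclideanSpace ℝ (Fin n)} (hf : DifferentiableAt ℝ f x) (i : Fin n) :
    epd (fun y => nsq (f y)) i x = 2 * rinner (f x) (epd f i x) := by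
  rw [epd, hf.hasFDerivAt.nsq.fderiv, rinner_eq_inner]
  simp [epd]

end Calculus

theorem IsTwistorSpinor.epd_eq_of_isSolerSolution {n N : ℕ}
    {γ : Fin n → Matrix (Fin N) (Fin N) ℂ} {lam mu : ℝ}
    {ψ : EuclideanSpace ℝ (Fin n) → (Fin N → ℂ)}
    (htw : IsTwistorSpinor γ ψ) (hsol : IsSolerSolution γ lam mu ψ) (i : Fin n)
    (x : EuclideanSpace ℝ (Fin n)) :
    epd ψ i x = (-(lam + mu * nsq (ψ x)) / n) • (γ i *ᵥ ψ x) := by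
  rw [eq_neg_of_add_eq_zero_left (htw i x), hsol x, mulVec_smul, smul_smul, ← neg_smul]
  congr 1
  ring

theorem soler_twistor_const_norm_general {n N : ℕ}
    (γ : Fin n → Matrix (Fin N) (Fin N) ℂ) (hγ : IsCliffordFamily γ)
    (lam mu : ℝ) (ψ : EuclideanSpace ℝ (Fin n) → (Fin N → ℂ))
    (hψ : ContDiff ℝ (⊤ : ℕ∞) ψ) (hsoler : IsSolerSolution γ lam mu ψ)
    (htwistor : IsTwistorSpinor γ ψ) :
    ∀ x y, nsq (ψ x) = nsq (ψ y) := by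
  have hdiff : Differentiable ℝ ψ := hψ.differentiable (by simp)
  refine is_const_of_epd_eq_zero hdiff.nsq fun i x => ?_
  rw [epd_nsq_comp (hdiff x), htwistor.epd_eq_of_isSolerSolution hsoler, rinner_smul_right,
    rinner_mulVec_self_eq_zero (hγ.1 i), mul_zero, mul_zero]

/-- a smooth solution of the Soler equation which is also a twistor spinor
has constant norm. -/
theorem soler_twistor_const_norm {n N : ℕ} (hn : 1 ≤ n) (hN : 1 ≤ N)
    (γ : Fin n → Matrix (Fin N) (Fin N) ℂ) (hγ : IsCliffordFamily γ)
    (lam mu : ℝ) (ψ : EuclideanSpace ℝ (Fin n) → (Fin N → ℂ))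
    (hψ : ContDiff ℝ (⊤ : ℕ∞) ψ) (hsoler : IsSolerSolution γ lam mu ψ)
    (htwistor : IsTwistorSpinor γ ψ) :
    ∀ x y, nsq (ψ x) = nsq (ψ y) :=
  soler_twistor_const_norm_general γ hγ lam mu ψ hψ hsoler htwistor
end
end

section
/- Let ψ : ℝⁿ → ℂᴺ be a smooth solution of the Soler equation Dψ = λψ + μ|ψ|²ψ which is also a twistor spinor, i.e. ∂ᵢψ + (1/n)γᵢDψ = 0 for all i. Then its stress-energy tensor S_{ij} := ⟨γᵢ∂ⱼψ + γⱼ∂ᵢψ, ψ⟩ − δᵢⱼ μ|ψ|⁴ is a multiple of the identity: S_{ij} = (1/n) δᵢⱼ ( μ(2−n)|ψ|⁴ + 2λ|ψ|² ) for all i, j. -/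
open Matrix MeasureTheory

noncomputable section

/-- The stress-energy tensor of the Soler model:
`S_{ij} = ⟨γᵢ∂ⱼψ + γⱼ∂ᵢψ, ψ⟩ - δᵢⱼ μ |ψ|⁴`. -/
def solerStress {n N : ℕ} (γ : Fin n → Matrix (Fin N) (Fin N) ℂ) (mu : ℝ)
    (ψ : EuclideanSpace ℝ (Fin n) → (Fin N → ℂ)) (i j : Fin n)
    (x : EuclideanSpace ℝ (Fin n)) : ℝ :=
  rinner ((γ i).mulVec (epd ψ j x) + (γ j).mulVec (epd ψ i x)) (ψ x)
    - (if i = j then 1 else 0) * (mu * (nsq (ψ x)) ^ 2)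

lemma rinner_smul_left' {N : ℕ} (r : ℝ) (a b : Fin N → ℂ) :
    rinner (r • a) b = r * rinner a b := by
  unfold rinner
  have : ∀ k, star ((r • a) k) * b k = (r : ℂ) * (star (a k) * b k) := by
    intro k
    simp [Pi.smul_apply, Complex.real_smul, star_mul', mul_assoc]
  rw [Finset.sum_congr rfl (fun k _ => this k), ← Finset.mul_sum, Complex.re_ofReal_mul]

lemma rinner_neg_left' {N : ℕ} (a b : Fin N → ℂ) :
    rinner (-a) b = -rinner a b := by
  unfold rinner
  simp [← Finset.sum_neg_distrib]

lemma rinner_zero_left' {N : ℕ} (b : Fin N → ℂ) : rinner 0 b = 0 := by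
  simp [rinner]

/-- for a smooth solution of the Soler equation which is also a twistor
spinor, the stress-energy tensor is a multiple of the identity:
`S_{ij} = (1/n) δᵢⱼ (μ(2-n)|ψ|⁴ + 2λ|ψ|²)`. -/
theorem solerStress_of_twistor {n N : ℕ} (hn : 1 ≤ n) (hN : 1 ≤ N)
    (γ : Fin n → Matrix (Fin N) (Fin N) ℂ) (hγ : IsCliffordFamily γ)
    (lam mu : ℝ) (ψ : EuclideanSpace ℝ (Fin n) → (Fin N → ℂ))
    (hψ : ContDiff ℝ (⊤ : ℕ∞) ψ) (hsoler : IsSolerSolution γ lam mu ψ)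
    (htwistor : IsTwistorSpinor γ ψ) :
    ∀ i j x, solerStress γ mu ψ i j x
      = (1 / (n : ℝ)) * (if i = j then 1 else 0)
        * (mu * (2 - (n : ℝ)) * (nsq (ψ x)) ^ 2 + 2 * lam * nsq (ψ x)) := by
  intro i j x
  have hn0 : (n : ℝ) ≠ 0 := by positivity
  set Dx := Dirac γ ψ x with hDx
  have hD : Dx = (lam + mu * nsq (ψ x)) • ψ x := hsoler x
  have hE : ∀ k, epd ψ k x = -(((1 : ℝ) / n) • (γ k).mulVec Dx) := by
    intro k
    exact eq_neg_of_add_eq_zero_left (htwistor k x)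
  have key : (γ i).mulVec (epd ψ j x) + (γ j).mulVec (epd ψ i x)
      = -(((1 : ℝ) / n) • ((γ i * γ j + γ j * γ i).mulVec Dx)) := by
    rw [hE i, hE j]
    simp only [Matrix.mulVec_neg, Matrix.mulVec_smul, Matrix.mulVec_mulVec,
      Matrix.add_mulVec, smul_add]
    abel
  rw [hγ.2 i j] at key
  have hr : rinner Dx (ψ x) = (lam + mu * nsq (ψ x)) * nsq (ψ x) := by
    rw [hD, rinner_smul_left']; rfl
  unfold solerStress
  by_cases hij : i = j
  · subst hij
    rw [if_pos rfl] at key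
    have h2 : ((-(2 : ℂ)) • (1 : Matrix (Fin N) (Fin N) ℂ)).mulVec Dx
        = (-(2 : ℝ)) • Dx := by
      rw [Matrix.smul_mulVec, Matrix.one_mulVec]
      funext k
      simp [Complex.real_smul]
    rw [h2] at key
    rw [key, rinner_neg_left', rinner_smul_left', rinner_smul_left', hr, if_pos rfl]
    field_simp
    ring
  · simp only [if_neg hij] at key ⊢
    rw [key]
    simp only [Matrix.zero_mulVec, smul_zero, neg_zero, rinner_zero_left']
    ring
end
end

section
/- Analytic Liouville lemma (the engine of the Liouville theorem on complete manifolds with positive Ricci curvature, specialized to Euclidean space): let n ≥ 1 and let f : ℝⁿ → ℝ be a smooth nonnegative function satisfying the pointwise differential inequality 2 f(x) Δf(x) ≥ |∇f(x)|² for all x ∈ ℝⁿ (equivalently, √(f+ε) is subharmonic for every ε > 0), where Δ = ∑ᵢ∂ᵢ∂ᵢ and ∇f is the gradient. If ∫_{ℝⁿ} f dx < ∞, then f ≡ 0. -/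
open MeasureTheory

noncomputable section

/-- Euclidean Laplacian. -/
def lapl {n : ℕ} (f : EuclideanSpace ℝ (Fin n) → ℝ) (x : EuclideanSpace ℝ (Fin n)) : ℝ :=
  ∑ i, epd (epd f i) i x

/-!
Testing `|∇f|² ≤ 2 f Δf` against `ψ = φ² f/(f+1)` and integrating by parts gives the Caccioppoli
estimate `∫ φ² |∇f|²/(f+1) ≤ 16 ∫ |∇φ|² f`; the weight `f/(f+1) < 1` is what lets the right-hand
side involve `f` only to the first power, so that `f ∈ L¹` suffices. For `φ(x) = χ(x/R)` with a
fixed bump `χ` the right-hand side is `O(‖f‖₁ / R²)`, hence `∇f ≡ 0` as `R → ∞`. So `f` is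
constant, and a constant integrable over `ℝⁿ`, which has infinite volume when `n ≥ 1`, is zero.
-/

variable {n : ℕ}

local notation "ℝⁿ" => EuclideanSpace ℝ (Fin n)

open Filter Metric

theorem contDiff_epd {k m : WithTop ℕ∞} {f : ℝⁿ → ℝ} (hf : ContDiff ℝ k f) (hmk : m + 1 ≤ k)
    (i : Fin n) : ContDiff ℝ m (epd f i) :=
  (hf.fderiv_right hmk).clm_apply contDiff_const

theorem continuous_epd {f : ℝⁿ → ℝ} (hf : ContDiff ℝ 1 f) (i : Fin n) : Continuous (epd f i) :=
  (contDiff_epd (m := 0) hf (by norm_num) i).continuous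

theorem HasCompactSupport.epd {f : ℝⁿ → ℝ} (hf : HasCompactSupport f) (i : Fin n) :
    HasCompactSupport (epd f i) :=
  (hf.fderiv (𝕜 := ℝ)).comp_left (g := fun L : ℝⁿ →L[ℝ] ℝ => L (EuclideanSpace.single i 1)) rfl

theorem integral_mul_epd_eq_neg {ψ g : ℝⁿ → ℝ} (hψ : ContDiff ℝ 1 ψ) (hψc : HasCompactSupport ψ)
    (hg : ContDiff ℝ 1 g) (i : Fin n) :
    ∫ x, ψ x * epd g i x = -∫ x, epd ψ i x * g x :=
  integral_mul_fderiv_eq_neg_fderiv_mul_of_integrable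
    (((continuous_epd hψ i).mul hg.continuous).integrable_of_hasCompactSupport
      (hψc.epd i).mul_right)
    ((hψ.continuous.mul (continuous_epd hg i)).integrable_of_hasCompactSupport hψc.mul_right)
    ((hψ.continuous.mul hg.continuous).integrable_of_hasCompactSupport hψc.mul_right)
    (fun x _ => hψ.differentiable one_ne_zero x) (fun x _ => hg.differentiable one_ne_zero x)

theorem integral_mul_lapl_eq_neg {ψ g : ℝⁿ → ℝ} (hψ : ContDiff ℝ 1 ψ) (hψc : HasCompactSupport ψ)
    (hg : ContDiff ℝ 2 g) :
    ∫ x, ψ x * lapl g x = -∫ x, ∑ i, epd ψ i x * epd g i x := by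
  have hg' (i : Fin n) : ContDiff ℝ 1 (epd g i) := contDiff_epd hg (by norm_num) i
  simp only [lapl, Finset.mul_sum]
  rw [integral_finsetSum, integral_finsetSum, ← Finset.sum_neg_distrib]
  · exact Finset.sum_congr rfl fun i _ => integral_mul_epd_eq_neg hψ hψc (hg' i) i
  · exact fun i _ => ((continuous_epd hψ i).mul (hg' i).continuous).integrable_of_hasCompactSupport
      (hψc.epd i).mul_right
  · exact fun i _ => (hψ.continuous.mul (continuous_epd (hg' i) i)).integrable_of_hasCompactSupport
      hψc.mul_right

theorem continuous_lapl {f : ℝⁿ → ℝ} (hf : ContDiff ℝ 2 f) : Continuous (lapl f) :=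
  continuous_finsetSum _ fun i _ => continuous_epd (contDiff_epd hf (by norm_num) i) i

def gradSq (f : ℝⁿ → ℝ) (x : ℝⁿ) : ℝ := ∑ i, epd f i x ^ 2

theorem gradSq_nonneg (f : ℝⁿ → ℝ) (x : ℝⁿ) : 0 ≤ gradSq f x :=
  Finset.sum_nonneg fun _ _ => sq_nonneg _

theorem continuous_gradSq {f : ℝⁿ → ℝ} (hf : ContDiff ℝ 1 f) : Continuous (gradSq f) :=
  continuous_finsetSum _ fun i _ => (continuous_epd hf i).pow 2

theorem HasCompactSupport.gradSq {f : ℝⁿ → ℝ} (hf : HasCompactSupport f) :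
    HasCompactSupport (gradSq f) :=
  (hf.fderiv (𝕜 := ℝ)).mono <| Function.support_subset_iff'.2 fun x hx => by
    simp [_root_.gradSq, _root_.epd, Function.notMem_support.1 hx]

theorem gradSq_eq_zero_iff {f : ℝⁿ → ℝ} {x : ℝⁿ} : gradSq f x = 0 ↔ fderiv ℝ f x = 0 := by
  simp only [gradSq, Finset.sum_eq_zero_iff_of_nonneg fun _ _ => sq_nonneg _, Finset.mem_univ,
    true_implies, pow_eq_zero_iff two_ne_zero, epd]
  refine ⟨fun h => ?_, fun h i => by simp [h]⟩
  apply ContinuousLinearMap.coe_injective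
  refine (EuclideanSpace.basisFun (Fin n) ℝ).toBasis.ext fun i => ?_
  simpa using h i

def caccioppoliTest (φ f : ℝⁿ → ℝ) (x : ℝⁿ) : ℝ := φ x ^ 2 * (f x / (f x + 1))

theorem contDiff_caccioppoliTest {k : WithTop ℕ∞} {φ f : ℝⁿ → ℝ} (hφ : ContDiff ℝ k φ)
    (hf : ContDiff ℝ k f) (hpos : ∀ x, 0 ≤ f x) : ContDiff ℝ k (caccioppoliTest φ f) :=
  (hφ.pow 2).mul (hf.div (hf.add contDiff_const) fun x => by linarith [hpos x])

theorem HasCompactSupport.caccioppoliTest {φ : ℝⁿ → ℝ} (hφ : HasCompactSupport φ) (f : ℝⁿ → ℝ) :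
    HasCompactSupport (caccioppoliTest φ f) :=
  hφ.mono <| Function.support_subset_iff'.2 fun x hx => by
    simp [_root_.caccioppoliTest, Function.notMem_support.1 hx]

theorem epd_caccioppoliTest {φ f : ℝⁿ → ℝ} {x : ℝⁿ} (hφ : DifferentiableAt ℝ φ x)
    (hf : DifferentiableAt ℝ f x) (hx : f x + 1 ≠ 0) (i : Fin n) :
    epd (caccioppoliTest φ f) i x =
      2 * φ x * epd φ i x * (f x / (f x + 1)) + φ x ^ 2 * (epd f i x / (f x + 1) ^ 2) := by
  have hw : HasDerivAt (fun t => t / (t + 1)) ((1 * (f x + 1) - f x * 1) / (f x + 1) ^ 2) (f x) :=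
    (hasDerivAt_id _).div ((hasDerivAt_id _).add_const 1) hx
  have h := (hφ.hasFDerivAt.pow 2).mul (hw.comp_hasFDerivAt x hf.hasFDerivAt)
  rw [epd, (show HasFDerivAt (caccioppoliTest φ f) _ x from h).fderiv]
  simp only [epd, add_apply, FunLike.coe_smul, Pi.smul_apply,
    Function.comp_apply, nsmul_eq_mul, smul_eq_mul]
  field_simp
  ring

theorem sq_mul_gradSq_div_le_two_mul_caccioppoliTest_mul_lapl {φ f : ℝⁿ → ℝ} {x : ℝⁿ}
    (hx : 0 ≤ f x) (hineq : gradSq f x ≤ 2 * f x * lapl f x) :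
    φ x ^ 2 * (gradSq f x / (f x + 1)) ≤ 2 * (caccioppoliTest φ f x * lapl f x) := by
  calc φ x ^ 2 * (gradSq f x / (f x + 1)) = φ x ^ 2 / (f x + 1) * gradSq f x := by ring
    _ ≤ φ x ^ 2 / (f x + 1) * (2 * f x * lapl f x) :=
        mul_le_mul_of_nonneg_left hineq (div_nonneg (sq_nonneg _) (by linarith))
    _ = 2 * (caccioppoliTest φ f x * lapl f x) := by unfold caccioppoliTest; ring

theorem neg_two_mul_sum_epd_caccioppoliTest_le {φ f : ℝⁿ → ℝ} {x : ℝⁿ}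
    (hφ : DifferentiableAt ℝ φ x) (hf : DifferentiableAt ℝ f x) (hx : 0 ≤ f x) :
    -(2 * ∑ i, epd (caccioppoliTest φ f) i x * epd f i x) ≤
      1 / 2 * (φ x ^ 2 * (gradSq f x / (f x + 1))) + 8 * (gradSq φ x * f x) := by
  have key (a b c t : ℝ) (ht : 0 ≤ t) :
      -(2 * ((2 * a * b * (t / (t + 1)) + a ^ 2 * (c / (t + 1) ^ 2)) * c)) ≤
        1 / 2 * (a ^ 2 * (c ^ 2 / (t + 1))) + 8 * (b ^ 2 * t) := by
    -- the cross term is absorbed by AM-GM, `-4abct ≤ a²c²/2 + 8b²t²`, and `t²/(t+1) ≤ t`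
    have expand : 1 / 2 * (a ^ 2 * (c ^ 2 / (t + 1))) + 8 * (b ^ 2 * t) -
        -(2 * ((2 * a * b * (t / (t + 1)) + a ^ 2 * (c / (t + 1) ^ 2)) * c)) =
        ((t + 1) * (a * c + 4 * b * t) ^ 2 / 2 + 8 * b ^ 2 * t * (t + 1) + 2 * (a * c) ^ 2) /
          (t + 1) ^ 2 := by
      field_simp
      ring
    rw [← sub_nonneg, expand]
    have := mul_nonneg (mul_nonneg (sq_nonneg b) ht) (by linarith : 0 ≤ t + 1)
    positivity
  simp only [gradSq, Finset.mul_sum, Finset.sum_div, Finset.sum_mul, ← Finset.sum_neg_distrib,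
    ← Finset.sum_add_distrib]
  refine Finset.sum_le_sum fun i _ => ?_
  rw [epd_caccioppoliTest hφ hf (by linarith)]
  exact key _ _ _ _ hx

theorem caccioppoli_estimate {f φ : ℝⁿ → ℝ} (hf : ContDiff ℝ 2 f) (hpos : ∀ x, 0 ≤ f x)
    (hineq : ∀ x, gradSq f x ≤ 2 * f x * lapl f x) (hφ : ContDiff ℝ 1 φ)
    (hφc : HasCompactSupport φ) :
    ∫ x, φ x ^ 2 * (gradSq f x / (f x + 1)) ≤ 16 * ∫ x, gradSq φ x * f x := by
  set ψ := caccioppoliTest φ f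
  have hf1 : ContDiff ℝ 1 f := hf.of_le one_le_two
  have hψ : ContDiff ℝ 1 ψ := contDiff_caccioppoliTest hφ hf1 hpos
  have hψc : HasCompactSupport ψ := hφc.caccioppoliTest f
  have hA : Integrable fun x => φ x ^ 2 * (gradSq f x / (f x + 1)) :=
    ((hφ.continuous.pow 2).mul ((continuous_gradSq hf1).div (hf1.continuous.add continuous_const)
      fun x => (add_pos_of_nonneg_of_pos (hpos x) one_pos).ne')).integrable_of_hasCompactSupport
      (hφc.comp_left (g := (· ^ 2)) (zero_pow two_ne_zero)).mul_right
  have hB : Integrable fun x => gradSq φ x * f x :=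
    ((continuous_gradSq hφ).mul hf1.continuous).integrable_of_hasCompactSupport hφc.gradSq.mul_right
  have hψΔ : Integrable fun x => ψ x * lapl f x :=
    (hψ.continuous.mul (continuous_lapl hf)).integrable_of_hasCompactSupport hψc.mul_right
  have hψf : Integrable fun x => ∑ i, epd ψ i x * epd f i x :=
    integrable_finsetSum _ fun i _ => ((continuous_epd hψ i).mul (continuous_epd hf1 i))
      |>.integrable_of_hasCompactSupport (hψc.epd i).mul_right
  have hmain : ∫ x, φ x ^ 2 * (gradSq f x / (f x + 1)) ≤
      1 / 2 * (∫ x, φ x ^ 2 * (gradSq f x / (f x + 1))) + 8 * ∫ x, gradSq φ x * f x :=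
    calc ∫ x, φ x ^ 2 * (gradSq f x / (f x + 1))
        ≤ ∫ x, 2 * (ψ x * lapl f x) := integral_mono hA (hψΔ.const_mul 2) fun x =>
          sq_mul_gradSq_div_le_two_mul_caccioppoliTest_mul_lapl (hpos x) (hineq x)
      _ = ∫ x, -(2 * ∑ i, epd ψ i x * epd f i x) := by
          rw [integral_const_mul, integral_mul_lapl_eq_neg hψ hψc hf, integral_neg,
            integral_const_mul]
          ring
      _ ≤ ∫ x, (1 / 2 * (φ x ^ 2 * (gradSq f x / (f x + 1))) + 8 * (gradSq φ x * f x)) :=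
          integral_mono (hψf.const_mul 2).neg ((hA.const_mul _).add (hB.const_mul _)) fun x =>
            neg_two_mul_sum_epd_caccioppoliTest_le (hφ.differentiable one_ne_zero x)
              (hf1.differentiable one_ne_zero x) (hpos x)
      _ = _ := by
          rw [integral_add (hA.const_mul _) (hB.const_mul _), integral_const_mul,
            integral_const_mul]
  linarith

theorem epd_comp_smul {χ : ℝⁿ → ℝ} {c : ℝ} {x : ℝⁿ} (hχ : DifferentiableAt ℝ χ (c • x))
    (i : Fin n) : epd (fun y => χ (c • y)) i x = c * epd χ i (c • x) := by
  have h := hχ.hasFDerivAt.comp x ((hasFDerivAt_id x).const_smul c)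
  rw [epd, (show HasFDerivAt (fun y => χ (c • y)) _ x from h).fderiv]
  simp [epd]

theorem gradSq_comp_smul {χ : ℝⁿ → ℝ} {c : ℝ} {x : ℝⁿ} (hχ : DifferentiableAt ℝ χ (c • x)) :
    gradSq (fun y => χ (c • y)) x = c ^ 2 * gradSq χ (c • x) := by
  simp only [gradSq, epd_comp_smul hχ, Finset.mul_sum, mul_pow]

def unitBump (n : ℕ) : ContDiffBump (0 : EuclideanSpace ℝ (Fin n)) := ⟨1, 2, one_pos, one_lt_two⟩

def cutoff (R : ℝ) (x : ℝⁿ) : ℝ := unitBump n (R⁻¹ • x)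

theorem contDiff_cutoff {k : ℕ∞} (R : ℝ) : ContDiff ℝ k (cutoff (n := n) R) :=
  (unitBump n).contDiff.comp (contDiff_id.const_smul R⁻¹)

theorem hasCompactSupport_cutoff {R : ℝ} (hR : R ≠ 0) : HasCompactSupport (cutoff (n := n) R) :=
  (unitBump n).hasCompactSupport.comp_homeomorph (Homeomorph.smulOfNeZero R⁻¹ (inv_ne_zero hR))

theorem cutoff_eq_one {R : ℝ} (hR : 0 < R) {x : ℝⁿ} (hx : ‖x‖ ≤ R) : cutoff R x = 1 :=
  (unitBump n).one_of_mem_closedBall <| by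
    simpa [unitBump, norm_smul, abs_of_pos hR, inv_mul_le_one₀ hR] using hx

theorem exists_integral_gradSq_cutoff_mul_le : ∃ M, ∀ R : ℝ, ∀ g : ℝⁿ → ℝ, Integrable g →
    0 ≤ g → ∫ x, gradSq (cutoff R) x * g x ≤ M * (∫ x, g x) / R ^ 2 := by
  have hχ : ContDiff ℝ 1 (unitBump n) := (unitBump n).contDiff
  obtain ⟨M, hM⟩ := (continuous_gradSq hχ).bddAbove_range_of_hasCompactSupport
    (unitBump n).hasCompactSupport.gradSq
  refine ⟨M, fun R g hg hg0 => ?_⟩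
  have hbound (x : ℝⁿ) : gradSq (cutoff R) x ≤ M / R ^ 2 := by
    unfold cutoff
    rw [gradSq_comp_smul (hχ.differentiable one_ne_zero _), inv_pow, div_eq_inv_mul]
    exact mul_le_mul_of_nonneg_left (hM ⟨_, rfl⟩) (by positivity)
  calc ∫ x, gradSq (cutoff R) x * g x
      ≤ ∫ x, M / R ^ 2 * g x := integral_mono_of_nonneg
        (Eventually.of_forall fun x => mul_nonneg (gradSq_nonneg _ _) (hg0 x))
        (hg.const_mul _)
        (Eventually.of_forall fun x => mul_le_mul_of_nonneg_right (hbound x) (hg0 x))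
    _ = M * (∫ x, g x) / R ^ 2 := by rw [integral_const_mul]; ring

theorem setIntegral_ball_le_integral_cutoff_sq_mul {g : ℝⁿ → ℝ} (hg : Continuous g) (hg0 : 0 ≤ g)
    {r R : ℝ} (hR : 0 < R) (hrR : r ≤ R) :
    ∫ x in ball 0 r, g x ≤ ∫ x, cutoff R x ^ 2 * g x := by
  have hone : Set.EqOn (fun x => cutoff R x ^ 2 * g x) g (ball 0 r) := fun x hx => by
    simp [cutoff_eq_one hR ((mem_ball_zero_iff.1 hx).le.trans hrR)]
  rw [← setIntegral_congr_fun measurableSet_ball hone]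
  exact setIntegral_le_integral
    ((((contDiff_cutoff (k := 0) R).continuous.pow 2).mul hg).integrable_of_hasCompactSupport
      ((hasCompactSupport_cutoff hR.ne').comp_left (g := (· ^ 2)) (zero_pow two_ne_zero)).mul_right)
    (Eventually.of_forall fun x => mul_nonneg (sq_nonneg _) (hg0 x))

theorem eq_zero_of_integral_cutoff_sq_mul_le {g : ℝⁿ → ℝ} (hg : Continuous g) (hg0 : 0 ≤ g) {C : ℝ}
    (h : ∀ R > 0, ∫ x, cutoff R x ^ 2 * g x ≤ C / R ^ 2) : g = 0 := by
  funext x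
  set r := ‖x‖ + 1
  have hr : 0 < r := by positivity
  have hball : ∫ y in ball 0 r, g y ≤ 0 :=
    ge_of_tendsto (tendsto_const_nhds.div_atTop (tendsto_pow_atTop two_ne_zero)) <|
      eventually_atTop.2 ⟨r, fun R hR =>
        (setIntegral_ball_le_integral_cutoff_sq_mul hg hg0 (hr.trans_le hR) hR).trans
          (h R (hr.trans_le hR))⟩
  have hae : g =ᵐ[volume.restrict (ball 0 r)] 0 :=
    (setIntegral_eq_zero_iff_of_nonneg_ae (Eventually.of_forall hg0)
      ((hg.locallyIntegrable.integrableOn_isCompact (isCompact_closedBall 0 r)).mono_set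
        ball_subset_closedBall)).1
      (le_antisymm hball (setIntegral_nonneg measurableSet_ball fun y _ => hg0 y))
  exact Measure.eqOn_open_of_ae_eq hae isOpen_ball hg.continuousOn
    continuous_zero.continuousOn (mem_ball_zero_iff.2 (lt_add_one _))

theorem eq_zero_of_integrable_const {E F : Type*} [NormedAddCommGroup E] [NormedSpace ℝ E]
    [Nontrivial E] [FiniteDimensional ℝ E] [MeasurableSpace E] [BorelSpace E]
    [NormedAddCommGroup F] (μ : Measure E) [μ.IsAddHaarMeasure] {c : F}
    (hc : Integrable (fun _ : E => c) μ) : c = 0 :=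
  (integrable_const_iff.1 hc).resolve_right fun _ =>
    measure_ne_top μ Set.univ (measure_univ_of_isAddLeftInvariant μ)

/-- analytic Liouville lemma on `ℝⁿ`: a smooth nonnegative integrable
function satisfying `2 f Δf ≥ |∇f|²` pointwise vanishes identically. -/
theorem analytic_liouville {n : ℕ} (hn : 1 ≤ n)
    (f : EuclideanSpace ℝ (Fin n) → ℝ) (hf : ContDiff ℝ (⊤ : ℕ∞) f)
    (hpos : ∀ x, 0 ≤ f x)
    (hineq : ∀ x, (∑ i, (epd f i x) ^ 2) ≤ 2 * f x * lapl f x)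
    (hint : Integrable f volume) :
    ∀ x, f x = 0 := by
  have hf2 : ContDiff ℝ 2 f := hf.of_le (WithTop.coe_le_coe.2 le_top)
  have hf1 (x) : 0 < f x + 1 := by linarith [hpos x]
  obtain ⟨M, hM⟩ := exists_integral_gradSq_cutoff_mul_le (n := n)
  have hcacc (R : ℝ) (hR : 0 < R) :
      ∫ x, cutoff R x ^ 2 * (gradSq f x / (f x + 1)) ≤ 16 * M * (∫ x, f x) / R ^ 2 := by
    calc _ ≤ 16 * ∫ x, gradSq (cutoff R) x * f x :=
          caccioppoli_estimate hf2 hpos hineq (contDiff_cutoff R) (hasCompactSupport_cutoff hR.ne')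
      _ ≤ 16 * (M * (∫ x, f x) / R ^ 2) := by gcongr; exact hM R f hint hpos
      _ = _ := by ring
  have hgrad : ∀ x, gradSq f x = 0 := by
    have hvanish := eq_zero_of_integral_cutoff_sq_mul_le
      ((continuous_gradSq (hf2.of_le one_le_two)).div (hf2.continuous.add continuous_const)
        fun x => (hf1 x).ne')
      (fun x => div_nonneg (gradSq_nonneg f x) (hf1 x).le) hcacc
    intro x
    simpa [(hf1 x).ne'] using congrFun hvanish x
  have hconst (x) : f x = f 0 := is_const_of_fderiv_eq_zero (hf2.differentiable two_ne_zero)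
    (fun y => gradSq_eq_zero_iff.1 (hgrad y)) x 0
  have : NeZero n := ⟨by omega⟩
  have hf0 : f 0 = 0 := eq_zero_of_integrable_const volume (hint.congr (.of_forall hconst))
  exact fun x => (hconst x).trans hf0
end
end

section
/- Divergence-free stress-energy tensor for the flat-target Dirac-harmonic map system: let φ : ℝⁿ → ℝᵐ be smooth and harmonic (Δφ = 0) and let ψ = (ψ¹,…,ψᵐ) : ℝⁿ → (ℂᴺ)ᵐ be a smooth vector spinor with Dψ = 0 (i.e. ∑ᵢγᵢ∂ᵢψ^α = 0 for each α). Define S_{ij} := 2⟨∂ᵢφ, ∂ⱼφ⟩_{ℝᵐ} − δᵢⱼ|dφ|² + ½⟨ψ, γᵢ∂ⱼψ + γⱼ∂ᵢψ⟩ for 1 ≤ i,j ≤ n, where |dφ|² := ∑ᵢ|∂ᵢφ|². Then S is symmetric, ∑ⱼ₌₁ⁿ ∂ⱼS_{ij} = 0 for every i, and ∑ᵢ₌₁ⁿ S_{ii} = (2−n)|dφ|². -/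
open Matrix MeasureTheory

noncomputable section

/-- Real part of the Hermitian inner product on `(ℂᴺ)ᵐ`, summed over the `m` components. -/
def rinnerV {m N : ℕ} (a b : Fin m → Fin N → ℂ) : ℝ := ∑ α, rinner (a α) (b α)

/-- Squared Hermitian norm on `(ℂᴺ)ᵐ`. -/
def nsqV {m N : ℕ} (a : Fin m → Fin N → ℂ) : ℝ := rinnerV a a

/-- The Euclidean Dirac operator acting diagonally on vector spinors `ψ : ℝⁿ → (ℂᴺ)ᵐ`. -/
def DiracV {n N m : ℕ} (γ : Fin n → Matrix (Fin N) (Fin N) ℂ)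
    (ψ : EuclideanSpace ℝ (Fin n) → (Fin m → Fin N → ℂ))
    (x : EuclideanSpace ℝ (Fin n)) : Fin m → Fin N → ℂ :=
  fun α => ∑ i, (γ i).mulVec (epd ψ i x α)

/-- The Euclidean inner product `⟨∂ᵢφ, ∂ⱼφ⟩` of partial derivatives of a map
`φ : ℝⁿ → ℝᵐ`. -/
def dphiInner {n m : ℕ} (φ : EuclideanSpace ℝ (Fin n) → (Fin m → ℝ)) (i j : Fin n)
    (x : EuclideanSpace ℝ (Fin n)) : ℝ :=
  ∑ a, epd φ i x a * epd φ j x a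

/-- `φ` is harmonic: `Δφ = 0` componentwise. -/
def IsHarmonic {n m : ℕ} (φ : EuclideanSpace ℝ (Fin n) → (Fin m → ℝ)) : Prop :=
  ∀ x, ∑ i, epd (epd φ i) i x = 0

/-- The stress-energy tensor of the flat-target Dirac-harmonic map system:
`S_{ij} = 2⟨∂ᵢφ,∂ⱼφ⟩ - δᵢⱼ|dφ|² + ½⟨ψ, γᵢ∂ⱼψ + γⱼ∂ᵢψ⟩`. -/
def dhStress {n N m : ℕ} (γ : Fin n → Matrix (Fin N) (Fin N) ℂ)
    (φ : EuclideanSpace ℝ (Fin n) → (Fin m → ℝ))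
    (ψ : EuclideanSpace ℝ (Fin n) → (Fin m → Fin N → ℂ)) (i j : Fin n)
    (x : EuclideanSpace ℝ (Fin n)) : ℝ :=
  2 * dphiInner φ i j x - (if i = j then 1 else 0) * (∑ i', dphiInner φ i' i' x)
    + (1 / 2 : ℝ) * rinnerV (ψ x)
        (fun α => (γ i).mulVec (epd ψ j x α) + (γ j).mulVec (epd ψ i x α))

/-!
The harmonic part `2⟨∂ᵢφ, ∂ⱼφ⟩ - δᵢⱼ|dφ|²` of the stress tensor has divergence `2⟨∂ᵢφ, Δφ⟩`,
by the symmetry of second derivatives. Differentiating the spinor part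
`⟨ψ, γᵢ∂ⱼψ + γⱼ∂ᵢψ⟩` in `xⱼ` and summing gives four terms: `⟨∂ⱼψ, γᵢ∂ⱼψ⟩ = 0` as `γᵢ` is
skew-Hermitian, `∑ⱼ ⟨∂ⱼψ, γⱼ∂ᵢψ⟩ = -⟨Dψ, ∂ᵢψ⟩`, `∑ⱼ ⟨ψ, γⱼ∂ⱼ∂ᵢψ⟩ = ⟨ψ, ∂ᵢ(Dψ)⟩`, and
`⟨ψ, γᵢΔψ⟩`, which vanishes because the Clifford relations give `D² = -Δ`. The trace of the
spinor part is `⟨ψ, Dψ⟩ = 0`.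
-/

section PartialDerivatives

variable {n : ℕ} {E F G : Type*} [NormedAddCommGroup E] [NormedSpace ℝ E]
  [NormedAddCommGroup F] [NormedSpace ℝ F] [NormedAddCommGroup G] [NormedSpace ℝ G]
  {f g : EuclideanSpace ℝ (Fin n) → E} {x : EuclideanSpace ℝ (Fin n)} {i : Fin n}

theorem ContDiff.differentiable_epd (hf : ContDiff ℝ 2 f) (i : Fin n) :
    Differentiable ℝ (epd f i) :=
  ((hf.fderiv_right (m := 1) (by norm_num)).clm_apply contDiff_const).differentiable
    (by norm_num)

theorem epd_comm (hf : ContDiffAt ℝ 2 f x) (i j : Fin n) :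
    epd (epd f i) j x = epd (epd f j) i x := by
  have hf' : DifferentiableAt ℝ (fderiv ℝ f) x :=
    (hf.fderiv_right (m := 1) (by norm_num)).differentiableAt (by norm_num)
  have key (v w : EuclideanSpace ℝ (Fin n)) :
      fderiv ℝ (fun y => fderiv ℝ f y v) x w = fderiv ℝ (fderiv ℝ f) x w v := by
    simp [fderiv_clm_apply hf' (differentiableAt_const v)]
  exact (key _ _).trans (((hf.isSymmSndFDerivAt (by simp)).eq _ _).trans (key _ _).symm)

theorem epd_const (c : E) (i : Fin n) (x : EuclideanSpace ℝ (Fin n)) :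
    epd (fun _ => c) i x = 0 := by
  simp [epd]

theorem epd_add (hf : DifferentiableAt ℝ f x) (hg : DifferentiableAt ℝ g x) :
    epd (fun y => f y + g y) i x = epd f i x + epd g i x := by
  simp [epd, fderiv_fun_add hf hg]

theorem epd_sub (hf : DifferentiableAt ℝ f x) (hg : DifferentiableAt ℝ g x) :
    epd (fun y => f y - g y) i x = epd f i x - epd g i x := by
  simp [epd, fderiv_fun_sub hf hg]

theorem epd_sum {ι : Type*} {s : Finset ι} {f : ι → EuclideanSpace ℝ (Fin n) → E}
    (hf : ∀ a ∈ s, DifferentiableAt ℝ (f a) x) :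
    epd (fun y => ∑ a ∈ s, f a y) i x = ∑ a ∈ s, epd (f a) i x := by
  simp [epd, fderiv_fun_sum hf]

theorem epd_const_mul {f : EuclideanSpace ℝ (Fin n) → ℝ} (c : ℝ) (hf : DifferentiableAt ℝ f x) :
    epd (fun y => c * f y) i x = c * epd f i x := by
  simp [epd, fderiv_const_mul hf]

theorem ContinuousLinearMap.epd_comp (L : E →L[ℝ] F) (hf : DifferentiableAt ℝ f x) :
    epd (fun y => L (f y)) i x = L (epd f i x) := by
  simp [epd, fderiv_fun_comp x L.differentiableAt hf]

theorem ContinuousLinearMap.epd_bilinear (B : E →L[ℝ] F →L[ℝ] G)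
    {g : EuclideanSpace ℝ (Fin n) → F} (hf : DifferentiableAt ℝ f x)
    (hg : DifferentiableAt ℝ g x) :
    epd (fun y => B (f y) (g y)) i x = B (epd f i x) (g x) + B (f x) (epd g i x) := by
  simp [epd, B.fderiv_of_bilinear hf hg, add_comm]

end PartialDerivatives

section SpinorAlgebra

variable {n m N : ℕ}

def diagMulVec (A : Matrix (Fin N) (Fin N) ℂ) :
    (Fin m → Fin N → ℂ) →L[ℝ] (Fin m → Fin N → ℂ) :=
  LinearMap.toContinuousLinearMap
    (LinearMap.pi fun α => (A.mulVecLin.restrictScalars ℝ).comp (LinearMap.proj α))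

@[simp]
theorem diagMulVec_apply (A : Matrix (Fin N) (Fin N) ℂ) (v : Fin m → Fin N → ℂ) (α : Fin m) :
    diagMulVec A v α = A *ᵥ v α := rfl

theorem IsCliffordFamily.sum_mulVec_mulVec_of_symm {γ : Fin n → Matrix (Fin N) (Fin N) ℂ}
    (hγ : IsCliffordFamily γ) {w : Fin n → Fin n → Fin N → ℂ} (hw : ∀ k j, w k j = w j k) :
    ∑ k, ∑ j, γ k *ᵥ γ j *ᵥ w k j = -∑ k, w k k := by
  have hswap : ∑ k, ∑ j, γ k *ᵥ γ j *ᵥ w k j = ∑ k, ∑ j, γ j *ᵥ γ k *ᵥ w k j := by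
    rw [Finset.sum_comm]
    exact Finset.sum_congr rfl fun k _ => Finset.sum_congr rfl fun j _ => by rw [hw]
  have hdiag (k : Fin n) : ∑ j, (γ k * γ j + γ j * γ k) *ᵥ w k j = (-2 : ℂ) • w k k := by
    rw [Finset.sum_eq_single k (fun j _ hjk => by simp [hγ.2, Ne.symm hjk]) (by simp)]
    rw [hγ.2, if_pos rfl, smul_mulVec, one_mulVec]
  have h2 : (2 : ℂ) • ∑ k, ∑ j, γ k *ᵥ γ j *ᵥ w k j = (2 : ℂ) • -∑ k, w k k := by
    conv_lhs => rw [two_smul]; enter [2]; rw [hswap]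
    simp only [← Finset.sum_add_distrib, mulVec_mulVec, ← add_mulVec, hdiag,
      neg_smul, Finset.sum_neg_distrib, Finset.smul_sum, smul_neg]
  exact smul_right_injective _ two_ne_zero h2

theorem IsCliffordFamily.sum_diagMulVec_diagMulVec_of_symm
    {γ : Fin n → Matrix (Fin N) (Fin N) ℂ} (hγ : IsCliffordFamily γ)
    {w : Fin n → Fin n → Fin m → Fin N → ℂ} (hw : ∀ k j, w k j = w j k) :
    ∑ k, ∑ j, diagMulVec (γ k) (diagMulVec (γ j) (w k j)) = -∑ k, w k k := by
  ext1 α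
  simpa [Finset.sum_apply] using
    hγ.sum_mulVec_mulVec_of_symm (w := fun k j => w k j α) fun k j => by rw [hw]

theorem isBilinearMap_rinnerV : IsBilinearMap ℝ (rinnerV (m := m) (N := N)) where
  add_left a b c := by simp [rinnerV, rinner, add_mul, Finset.sum_add_distrib]
  smul_left r a b := by simp [rinnerV, rinner, Finset.mul_sum, mul_assoc]
  add_right a b c := by simp [rinnerV, rinner, mul_add, Finset.sum_add_distrib]
  smul_right r a b := by simp [rinnerV, rinner, Finset.mul_sum, mul_left_comm]

def rinnerVBilin : (Fin m → Fin N → ℂ) →L[ℝ] (Fin m → Fin N → ℂ) →L[ℝ] ℝ :=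
  isBilinearMap_rinnerV.toContinuousBilinearMap

@[simp]
theorem rinnerVBilin_apply (a b : Fin m → Fin N → ℂ) : rinnerVBilin a b = rinnerV a b := rfl

theorem rinner_eq_dotProduct (a b : Fin N → ℂ) : rinner a b = (star a ⬝ᵥ b).re := rfl

theorem rinnerV_comm (a b : Fin m → Fin N → ℂ) : rinnerV a b = rinnerV b a := by
  refine Finset.sum_congr rfl fun α _ => ?_
  rw [rinner_eq_dotProduct, rinner_eq_dotProduct, ← Complex.conj_re, ← Complex.star_def,
    ← star_dotProduct_star, star_star]

theorem rinnerV_diagMulVec (A : Matrix (Fin N) (Fin N) ℂ) (a b : Fin m → Fin N → ℂ) :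
    rinnerV a (diagMulVec A b) = rinnerV (diagMulVec Aᴴ a) b := by
  refine Finset.sum_congr rfl fun α _ => ?_
  simp only [rinner_eq_dotProduct, diagMulVec_apply, dotProduct_mulVec, star_mulVec,
    conjTranspose_conjTranspose]

theorem rinnerV_diagMulVec_of_skew {A : Matrix (Fin N) (Fin N) ℂ} (hA : Aᴴ = -A)
    (a b : Fin m → Fin N → ℂ) : rinnerV a (diagMulVec A b) = -rinnerV (diagMulVec A a) b := by
  have hneg : diagMulVec (-A) a = -diagMulVec A a := by
    ext1 α
    simp [neg_mulVec]
  rw [rinnerV_diagMulVec, hA, hneg, ← rinnerVBilin_apply, map_neg]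
  rfl

theorem rinnerV_diagMulVec_self_of_skew {A : Matrix (Fin N) (Fin N) ℂ} (hA : Aᴴ = -A)
    (a : Fin m → Fin N → ℂ) : rinnerV a (diagMulVec A a) = 0 := by
  have h := rinnerV_diagMulVec_of_skew hA a a
  rw [rinnerV_comm (diagMulVec A a)] at h
  linarith

theorem rinnerV_sum_left {ι : Type*} (s : Finset ι) (a : ι → Fin m → Fin N → ℂ)
    (b : Fin m → Fin N → ℂ) : rinnerV (∑ j ∈ s, a j) b = ∑ j ∈ s, rinnerV (a j) b := by
  simp [← rinnerVBilin_apply]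

theorem rinnerV_sum_right {ι : Type*} (s : Finset ι) (a : Fin m → Fin N → ℂ)
    (b : ι → Fin m → Fin N → ℂ) : rinnerV a (∑ j ∈ s, b j) = ∑ j ∈ s, rinnerV a (b j) :=
  map_sum (rinnerVBilin a) b s

theorem rinnerV_zero_left (b : Fin m → Fin N → ℂ) : rinnerV 0 b = 0 := by
  simp [rinnerV, rinner]

theorem rinnerV_zero_right (a : Fin m → Fin N → ℂ) : rinnerV a 0 = 0 := by
  simp [rinnerV, rinner]

end SpinorAlgebra

section DiracOperator

variable {n N m : ℕ} {γ : Fin n → Matrix (Fin N) (Fin N) ℂ}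
  {ψ : EuclideanSpace ℝ (Fin n) → Fin m → Fin N → ℂ}

theorem diracV_eq_sum (γ : Fin n → Matrix (Fin N) (Fin N) ℂ)
    (ψ : EuclideanSpace ℝ (Fin n) → Fin m → Fin N → ℂ) (x : EuclideanSpace ℝ (Fin n)) :
    DiracV γ ψ x = ∑ j, diagMulVec (γ j) (epd ψ j x) := by
  ext1 α
  simp [DiracV, Finset.sum_apply]

theorem epd_diracV (hψ : ContDiff ℝ 2 ψ) (k : Fin n) (x : EuclideanSpace ℝ (Fin n)) :
    epd (DiracV γ ψ) k x = DiracV γ (epd ψ k) x := by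
  have hd (j : Fin n) : Differentiable ℝ fun y => diagMulVec (γ j) (epd ψ j y) :=
    (diagMulVec (γ j)).differentiable.comp (hψ.differentiable_epd j)
  rw [funext (diracV_eq_sum γ ψ), epd_sum fun j _ => hd j x, diracV_eq_sum]
  refine Finset.sum_congr rfl fun j _ => ?_
  rw [(diagMulVec (γ j)).epd_comp (hψ.differentiable_epd j x), epd_comm hψ.contDiffAt]

theorem diracV_epd_eq_zero (hψ : ContDiff ℝ 2 ψ) (hD : ∀ y, DiracV γ ψ y = 0) (k : Fin n)
    (x : EuclideanSpace ℝ (Fin n)) : DiracV γ (epd ψ k) x = 0 := by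
  rw [← epd_diracV hψ, funext hD, epd_const]

theorem laplacian_eq_zero_of_diracV_eq_zero (hγ : IsCliffordFamily γ) (hψ : ContDiff ℝ 2 ψ)
    (hD : ∀ y, DiracV γ ψ y = 0) (x : EuclideanSpace ℝ (Fin n)) :
    ∑ k, epd (epd ψ k) k x = 0 := by
  have hsymm := hγ.sum_diagMulVec_diagMulVec_of_symm (w := fun k j => epd (epd ψ k) j x)
    fun k j => epd_comm hψ.contDiffAt k j
  calc ∑ k, epd (epd ψ k) k x
      = -∑ k, diagMulVec (γ k) (DiracV γ (epd ψ k) x) := by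
        simp only [diracV_eq_sum, map_sum, hsymm, neg_neg]
    _ = 0 := by simp [diracV_epd_eq_zero hψ hD]

end DiracOperator

section StressTensor

variable {n N m : ℕ} {γ : Fin n → Matrix (Fin N) (Fin N) ℂ}
  {ψ : EuclideanSpace ℝ (Fin n) → Fin m → Fin N → ℂ}

def harmonicStress (φ : EuclideanSpace ℝ (Fin n) → Fin m → ℝ) (i j : Fin n)
    (x : EuclideanSpace ℝ (Fin n)) : ℝ :=
  2 * dphiInner φ i j x - (if i = j then 1 else 0) * ∑ k, dphiInner φ k k x

def spinorStress (γ : Fin n → Matrix (Fin N) (Fin N) ℂ)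
    (ψ : EuclideanSpace ℝ (Fin n) → Fin m → Fin N → ℂ) (i j : Fin n)
    (x : EuclideanSpace ℝ (Fin n)) : ℝ :=
  (1 / 2 : ℝ) * rinnerV (ψ x) (diagMulVec (γ i) (epd ψ j x) + diagMulVec (γ j) (epd ψ i x))

theorem spinorStress_eq (γ : Fin n → Matrix (Fin N) (Fin N) ℂ)
    (ψ : EuclideanSpace ℝ (Fin n) → Fin m → Fin N → ℂ) (i j : Fin n) :
    spinorStress γ ψ i j = fun x => (1 / 2 : ℝ) *
      rinnerVBilin (ψ x) (diagMulVec (γ i) (epd ψ j x) + diagMulVec (γ j) (epd ψ i x)) :=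
  rfl

theorem dhStress_eq_add (γ : Fin n → Matrix (Fin N) (Fin N) ℂ)
    (φ : EuclideanSpace ℝ (Fin n) → Fin m → ℝ)
    (ψ : EuclideanSpace ℝ (Fin n) → Fin m → Fin N → ℂ) (i j : Fin n) :
    dhStress γ φ ψ i j = fun x => harmonicStress φ i j x + spinorStress γ ψ i j x :=
  rfl

theorem dhStress_comm (γ : Fin n → Matrix (Fin N) (Fin N) ℂ)
    (φ : EuclideanSpace ℝ (Fin n) → Fin m → ℝ)
    (ψ : EuclideanSpace ℝ (Fin n) → Fin m → Fin N → ℂ) (i j : Fin n)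
    (x : EuclideanSpace ℝ (Fin n)) : dhStress γ φ ψ i j x = dhStress γ φ ψ j i x := by
  simp only [dhStress_eq_add, harmonicStress, spinorStress, dphiInner, mul_comm (epd φ i x _),
    eq_comm (a := i), add_comm (diagMulVec (γ i) _)]

theorem sum_harmonicStress_diag (φ : EuclideanSpace ℝ (Fin n) → Fin m → ℝ)
    (x : EuclideanSpace ℝ (Fin n)) :
    ∑ i, harmonicStress φ i i x = (2 - n) * ∑ i, dphiInner φ i i x := by
  simp only [harmonicStress, if_true, one_mul, Finset.sum_sub_distrib, ← Finset.mul_sum,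
    Finset.sum_const, Finset.card_univ, Fintype.card_fin, nsmul_eq_mul]
  ring

theorem sum_spinorStress_diag {x : EuclideanSpace ℝ (Fin n)} (hD : DiracV γ ψ x = 0) :
    ∑ i, spinorStress γ ψ i i x = 0 := by
  have hdiag (i : Fin n) :
      spinorStress γ ψ i i x = rinnerV (ψ x) (diagMulVec (γ i) (epd ψ i x)) := by
    simp only [spinorStress, ← rinnerVBilin_apply, map_add]
    ring
  simp only [hdiag, ← rinnerV_sum_right, ← diracV_eq_sum, hD, rinnerV_zero_right]

end StressTensor

section Divergence

variable {n N m : ℕ} {γ : Fin n → Matrix (Fin N) (Fin N) ℂ}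
  {φ : EuclideanSpace ℝ (Fin n) → Fin m → ℝ} {ψ : EuclideanSpace ℝ (Fin n) → Fin m → Fin N → ℂ}

def dotProductCLM {ι : Type*} [Fintype ι] : (ι → ℝ) →L[ℝ] (ι → ℝ) →L[ℝ] ℝ :=
  (dotProductBilin ℝ ℝ).toContinuousBilinearMap

theorem dphiInner_eq_dotProductCLM (φ : EuclideanSpace ℝ (Fin n) → Fin m → ℝ) (i j : Fin n) :
    dphiInner φ i j = fun x => dotProductCLM (epd φ i x) (epd φ j x) :=
  rfl

theorem ContDiff.differentiable_dphiInner (hφ : ContDiff ℝ 2 φ) (i j : Fin n) :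
    Differentiable ℝ (dphiInner φ i j) := by
  have := hφ.differentiable_epd i
  have := hφ.differentiable_epd j
  rw [dphiInner_eq_dotProductCLM]
  fun_prop

theorem epd_dphiInner (hφ : ContDiff ℝ 2 φ) (i j k : Fin n) (x : EuclideanSpace ℝ (Fin n)) :
    epd (dphiInner φ i j) k x =
      epd (epd φ i) k x ⬝ᵥ epd φ j x + epd φ i x ⬝ᵥ epd (epd φ j) k x :=
  dotProductCLM.epd_bilinear (hφ.differentiable_epd i x) (hφ.differentiable_epd j x)

theorem ContDiff.differentiable_harmonicStress (hφ : ContDiff ℝ 2 φ) (i j : Fin n) :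
    Differentiable ℝ (harmonicStress φ i j) := by
  have := hφ.differentiable_dphiInner
  unfold harmonicStress
  fun_prop

theorem sum_epd_harmonicStress (hφ : ContDiff ℝ 2 φ) (hharm : IsHarmonic φ) (i : Fin n)
    (x : EuclideanSpace ℝ (Fin n)) : ∑ j, epd (harmonicStress φ i j) j x = 0 := by
  have hdiv : ∑ j, epd (dphiInner φ i j) j x = ∑ k, epd (epd φ i) k x ⬝ᵥ epd φ k x := by
    simp only [epd_dphiInner hφ, Finset.sum_add_distrib, ← dotProduct_sum, hharm x,
      dotProduct_zero, add_zero]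
  have hgrad : epd (fun y => ∑ k, dphiInner φ k k y) i x =
      2 * ∑ k, epd (epd φ i) k x ⬝ᵥ epd φ k x := by
    rw [epd_sum fun k _ => hφ.differentiable_dphiInner k k x, Finset.mul_sum]
    refine Finset.sum_congr rfl fun k _ => ?_
    rw [epd_dphiInner hφ, epd_comm hφ.contDiffAt k i, dotProduct_comm (epd φ k x)]
    ring
  have hsplit (j : Fin n) : epd (harmonicStress φ i j) j x =
      2 * epd (dphiInner φ i j) j x
        - (if i = j then 1 else 0) * epd (fun y => ∑ k, dphiInner φ k k y) j x := by
    have := hφ.differentiable_dphiInner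
    unfold harmonicStress
    rw [epd_sub, epd_const_mul, epd_const_mul] <;> fun_prop
  simp only [hsplit, Finset.sum_sub_distrib, ← Finset.mul_sum, hdiv, ite_mul, one_mul, zero_mul,
    Finset.sum_ite_eq, Finset.mem_univ, if_true, hgrad, sub_self]

theorem ContDiff.differentiable_spinorStress (hψ : ContDiff ℝ 2 ψ) (i j : Fin n) :
    Differentiable ℝ (spinorStress γ ψ i j) := by
  have := hψ.differentiable_epd i
  have := hψ.differentiable_epd j
  have := hψ.differentiable (by norm_num)
  rw [spinorStress_eq]
  fun_prop

theorem epd_spinorStress (hψ : ContDiff ℝ 2 ψ) (i j k : Fin n) (x : EuclideanSpace ℝ (Fin n)) :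
    epd (spinorStress γ ψ i j) k x = (1 / 2 : ℝ) *
      (rinnerV (epd ψ k x) (diagMulVec (γ i) (epd ψ j x))
        + rinnerV (epd ψ k x) (diagMulVec (γ j) (epd ψ i x))
        + rinnerV (ψ x) (diagMulVec (γ i) (epd (epd ψ j) k x))
        + rinnerV (ψ x) (diagMulVec (γ j) (epd (epd ψ i) k x))) := by
  have := hψ.differentiable_epd i
  have := hψ.differentiable_epd j
  have := hψ.differentiable (by norm_num)
  rw [spinorStress_eq, epd_const_mul, rinnerVBilin.epd_bilinear, epd_add,
    (diagMulVec _).epd_comp, (diagMulVec _).epd_comp]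
  · simp only [map_add, rinnerVBilin_apply]
    ring
  all_goals fun_prop

theorem sum_epd_spinorStress (hγ : IsCliffordFamily γ) (hψ : ContDiff ℝ 2 ψ)
    (hD : ∀ y, DiracV γ ψ y = 0) (i : Fin n) (x : EuclideanSpace ℝ (Fin n)) :
    ∑ j, epd (spinorStress γ ψ i j) j x = 0 := by
  have h1 : ∑ j, rinnerV (epd ψ j x) (diagMulVec (γ i) (epd ψ j x)) = 0 :=
    Finset.sum_eq_zero fun j _ => rinnerV_diagMulVec_self_of_skew (hγ.1 i) _
  have h2 : ∑ j, rinnerV (epd ψ j x) (diagMulVec (γ j) (epd ψ i x)) = 0 := by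
    simp only [rinnerV_diagMulVec_of_skew (hγ.1 _), Finset.sum_neg_distrib, ← rinnerV_sum_left,
      ← diracV_eq_sum, hD, rinnerV_zero_left, neg_zero]
  have h3 : ∑ j, rinnerV (ψ x) (diagMulVec (γ i) (epd (epd ψ j) j x)) = 0 := by
    rw [← rinnerV_sum_right, ← map_sum, laplacian_eq_zero_of_diracV_eq_zero hγ hψ hD,
      map_zero, rinnerV_zero_right]
  have h4 : ∑ j, rinnerV (ψ x) (diagMulVec (γ j) (epd (epd ψ i) j x)) = 0 := by
    rw [← rinnerV_sum_right, ← diracV_eq_sum, diracV_epd_eq_zero hψ hD, rinnerV_zero_right]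
  simp only [epd_spinorStress hψ, ← Finset.mul_sum, Finset.sum_add_distrib, h1, h2, h3, h4,
    add_zero, mul_zero]

end Divergence

theorem dhStress_symm_divFree_trace_general {n N m : ℕ}
    (γ : Fin n → Matrix (Fin N) (Fin N) ℂ) (hγ : IsCliffordFamily γ)
    (φ : EuclideanSpace ℝ (Fin n) → (Fin m → ℝ)) (hφ : ContDiff ℝ (⊤ : ℕ∞) φ)
    (ψ : EuclideanSpace ℝ (Fin n) → (Fin m → Fin N → ℂ)) (hψ : ContDiff ℝ (⊤ : ℕ∞) ψ)
    (hharm : IsHarmonic φ) (hdirac : ∀ x, DiracV γ ψ x = 0) :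
    (∀ i j x, dhStress γ φ ψ i j x = dhStress γ φ ψ j i x) ∧
    (∀ i x, ∑ j, epd (fun y => dhStress γ φ ψ i j y) j x = 0) ∧
    (∀ x, ∑ i, dhStress γ φ ψ i i x = (2 - (n : ℝ)) * ∑ i', dphiInner φ i' i' x) := by
  have hφ2 : ContDiff ℝ 2 φ := hφ.of_le (WithTop.coe_le_coe.2 le_top)
  have hψ2 : ContDiff ℝ 2 ψ := hψ.of_le (WithTop.coe_le_coe.2 le_top)
  refine ⟨dhStress_comm γ φ ψ, fun i x => ?_, fun x => ?_⟩
  · have hsplit (j : Fin n) : epd (dhStress γ φ ψ i j) j x =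
        epd (harmonicStress φ i j) j x + epd (spinorStress γ ψ i j) j x :=
      epd_add (hφ2.differentiable_harmonicStress i j x) (hψ2.differentiable_spinorStress i j x)
    rw [Finset.sum_congr rfl fun j _ => hsplit j, Finset.sum_add_distrib,
      sum_epd_harmonicStress hφ2 hharm, sum_epd_spinorStress hγ hψ2 hdirac, add_zero]
  · simp only [dhStress_eq_add, Finset.sum_add_distrib, sum_harmonicStress_diag,
      sum_spinorStress_diag (hdirac x), add_zero]

/-- for the flat-target Dirac-harmonic map system (`Δφ = 0`, `Dψ = 0`)
the stress-energy tensor is symmetric, divergence-free, and has trace `(2-n)|dφ|²`. -/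
theorem dhStress_symm_divFree_trace {n N m : ℕ} (hn : 1 ≤ n) (hN : 1 ≤ N) (hm : 1 ≤ m)
    (γ : Fin n → Matrix (Fin N) (Fin N) ℂ) (hγ : IsCliffordFamily γ)
    (φ : EuclideanSpace ℝ (Fin n) → (Fin m → ℝ)) (hφ : ContDiff ℝ (⊤ : ℕ∞) φ)
    (ψ : EuclideanSpace ℝ (Fin n) → (Fin m → Fin N → ℂ)) (hψ : ContDiff ℝ (⊤ : ℕ∞) ψ)
    (hharm : IsHarmonic φ) (hdirac : ∀ x, DiracV γ ψ x = 0) :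
    (∀ i j x, dhStress γ φ ψ i j x = dhStress γ φ ψ j i x) ∧
    (∀ i x, ∑ j, epd (fun y => dhStress γ φ ψ i j y) j x = 0) ∧
    (∀ x, ∑ i, dhStress γ φ ψ i i x = (2 - (n : ℝ)) * ∑ i', dphiInner φ i' i' x) :=
  dhStress_symm_divFree_trace_general γ hγ φ hφ ψ hψ hharm hdirac
end
end
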